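/- If h : D → ℝ is continuously differentiable, S = {x ∈ D : h(x) ≥ 0}, and along any solution x(t) of the ODE ẋ = f(x) the inequality d/dt h(x(t)) ≥ -γ(h(x(t))) holds for a locally Lipschitz function γ : ℝ → ℝ with γ(0) = 0, then any solution starting in S remains in S for all forward times (h(x(t)) ≥ 0 for all t ≥ t₀ whenever h(x(t₀)) ≥ 0). -/
import Mathlib


open Set

/-- Forward invariance of the zero-superlevel set of a C¹ barrier function `h`
along solutions of `ẋ = f(x)`, given the comparison inequality
`d/dt h(x(t)) ≥ -γ(h(x(t)))` for a locally Lipschitz extended class-K `γ`. -/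
theorem cbf_forward_invariance
    {n : ℕ} (D : Set (EuclideanSpace ℝ (Fin n))) (hD : IsOpen D)
    (h : EuclideanSpace ℝ (Fin n) → ℝ) (hh : ContDiffOn ℝ 1 h D)
    (f : EuclideanSpace ℝ (Fin n) → EuclideanSpace ℝ (Fin n))
    (hf : LocallyLipschitz f)
    (γ : ℝ → ℝ) (hγlip : LocallyLipschitz γ) (hγ0 : γ 0 = 0) (hγmono : StrictMono γ)
    (t₀ T : ℝ) (x : ℝ → EuclideanSpace ℝ (Fin n))
    (hxD : ∀ t ∈ Ico t₀ T, x t ∈ D)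
    (hsol : ∀ t ∈ Ico t₀ T, HasDerivAt x (f (x t)) t)
    (h' : ℝ → ℝ)
    (hderiv : ∀ t ∈ Ico t₀ T, HasDerivAt (fun s => h (x s)) (h' t) t)
    (hcmp : ∀ t ∈ Ico t₀ T, h' t ≥ -γ (h (x t)))
    (hinit : h (x t₀) ≥ 0) (ht₀ : t₀ < T) :
    ∀ t ∈ Ico t₀ T, h (x t) ≥ 0 := by
  set v : ℝ → ℝ := fun s => h (x s) with hv
  intro t₁ ht₁
  by_contra hneg
  push_neg at hneg
  have ht₁0 : t₀ < t₁ := by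
    rcases lt_or_eq_of_le ht₁.1 with H | H
    · exact H
    · exfalso; rw [← H] at hneg; exact absurd hinit (not_le.mpr hneg)
  have hsub : Icc t₀ t₁ ⊆ Ico t₀ T := fun s hs => ⟨hs.1, lt_of_le_of_lt hs.2 ht₁.2⟩
  have hcont : ContinuousOn v (Icc t₀ t₁) := fun s hs =>
    (hderiv s (hsub hs)).continuousAt.continuousWithinAt
  set A : Set ℝ := Icc t₀ t₁ ∩ v ⁻¹' (Ici 0) with hA
  have hAne : A.Nonempty := ⟨t₀, ⟨le_refl _, le_of_lt ht₁0⟩, hinit⟩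
  have hAclosed : IsClosed A :=
    hcont.preimage_isClosed_of_isClosed isClosed_Icc isClosed_Ici
  have hAcomp : IsCompact A :=
    isCompact_Icc.of_isClosed_subset hAclosed inter_subset_left
  obtain ⟨hsA, hsup⟩ := hAcomp.exists_isGreatest hAne
  set s := sSup A with hs
  have hsG : IsGreatest A (sSup A) := ⟨hAcomp.sSup_mem hAne, fun a ha => le_csSup hAcomp.bddAbove ha⟩
  have hsIcc : s ∈ Icc t₀ t₁ := hsG.1.1
  have hvs : 0 ≤ v s := hsG.1.2
  have hst₁ : s < t₁ := by
    rcases lt_or_eq_of_le hsIcc.2 with H | H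
    · exact H
    · exfalso; rw [H] at hvs; exact absurd hvs (not_le.mpr hneg)
  -- on (s, t₁], v < 0
  have hlt : ∀ u ∈ Ioc s t₁, v u < 0 := by
    intro u hu
    by_contra hge
    push_neg at hge
    have : u ∈ A := ⟨⟨le_trans hsIcc.1 hu.1.le, hu.2⟩, hge⟩
    exact absurd (hsG.2 this) (not_le.mpr hu.1)
  -- MVT on [s, t₁]
  have hcont' : ContinuousOn v (Icc s t₁) :=
    hcont.mono (Icc_subset_Icc hsIcc.1 le_rfl)
  have hdiff : ∀ u ∈ Ioo s t₁, HasDerivAt v (h' u) u := fun u hu =>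
    hderiv u (hsub ⟨le_trans hsIcc.1 hu.1.le, hu.2.le⟩)
  obtain ⟨c, hc, hceq⟩ := exists_hasDerivAt_eq_slope v h' hst₁ hcont' hdiff
  have hvc : v c < 0 := hlt c ⟨hc.1, hc.2.le⟩
  have hpos : 0 < h' c := by
    have := hcmp c (hsub ⟨le_trans hsIcc.1 hc.1.le, hc.2.le⟩)
    have hγc : γ (v c) < 0 := by
      have := hγmono hvc
      rwa [hγ0] at this
    linarith
  have hslope : (v t₁ - v s) / (t₁ - s) < 0 :=
    div_neg_of_neg_of_pos (by linarith) (by linarith)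
  rw [hceq] at hpos
  linarith
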